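/- arXiv:1711.04797 — 5 statements merged into one kernel-verified Lean document; each statement's English description precedes it below -/
import Mathlib

section
/- Let G ⊆ GL(n, ℂ) be a group acting irreducibly on ℂⁿ such that the set of traces {tr(g) : g ∈ G} is finite. Then G is finite. -/
/-!
The span `A` of `G` is a matrix algebra with a basis `g₁, …, gₘ` taken from `G`, and an element
`g ∈ G` is determined by the traces `tr (g gᵢ)`, which range over a finite set; hence `G` is finite.
That `g` is determined needs the trace form to be nondegenerate on `A`. If `x ∈ A` and
`tr (x a) = 0` for all `a ∈ A`, then every `a x` has vanishing power traces, so it is nilpotent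
(in characteristic zero, by a Vandermonde argument on the generalized eigenvalues). If `x v ≠ 0`,
irreducibility gives `A (x v) = ℂⁿ`, so `v = a x v` for some `a ∈ A`, which forces `v = 0`.
-/

open Module LinearMap

lemma LinearMap.trace_pow_eq_of_isNilpotent_sub_algebraMap {R M : Type*} [CommRing R]
    [IsReduced R] [AddCommGroup M] [Module R M] [Module.Free R M] [Module.Finite R M]
    {g : Module.End R M} (μ : R) (hg : IsNilpotent (g - algebraMap R _ μ)) (k : ℕ) :
    trace R M (g ^ k) = μ ^ k * finrank R M := by
  induction k with
  | zero => simp [trace_one]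
  | succ k ih =>
    rw [pow_succ, Module.End.mul_eq_comp,
      trace_comp_eq_mul_of_commute_of_isNilpotent μ ((Commute.refl g).pow_left k) hg, ih,
      pow_succ]
    ring

lemma Finset.eq_zero_of_forall_sum_mul_pow_eq_zero {R : Type*} [CommRing R] [IsDomain R]
    {s : Finset R} {w : R → R} (h : ∀ k : ℕ, ∑ x ∈ s, w x * x ^ k = 0) : ∀ x ∈ s, w x = 0 := by
  let e := s.equivFin
  have hw : (fun i ↦ w (e.symm i)) = 0 := by
    refine Matrix.eq_zero_of_forall_pow_sum_mul_pow_eq_zero (f := fun i ↦ (e.symm i : R))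
      (Subtype.val_injective.comp e.symm.injective) fun i ↦ ?_
    rw [e.symm.sum_comp (fun x : s ↦ w x * (x : R) ^ (i : ℕ)),
      s.sum_coe_sort (fun x ↦ w x * x ^ (i : ℕ))]
    exact h i
  intro x hx
  simpa using congrFun hw (e ⟨x, hx⟩)

namespace Module.End

variable {K V : Type*} [Field K] [AddCommGroup V] [Module K V] [FiniteDimensional K V]

lemma trace_pow_restrict_maxGenEigenspace (f : End K V) (μ : K) (k : ℕ) :
    trace K _ (f.restrict (f.mapsTo_maxGenEigenspace_of_comm rfl μ) ^ k) =
      μ ^ k * finrank K (f.maxGenEigenspace μ) := by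
  refine trace_pow_eq_of_isNilpotent_sub_algebraMap μ ?_ k
  convert f.isNilpotent_restrict_maxGenEigenspace_sub_algebraMap μ
  ext
  rfl

lemma trace_pow_eq_sum_finrank_maxGenEigenspace_mul_pow [IsAlgClosed K] (f : End K V)
    (hf : {μ | f.maxGenEigenspace μ ≠ ⊥}.Finite) (k : ℕ) :
    trace K V (f ^ k) = ∑ μ ∈ hf.toFinset, finrank K (f.maxGenEigenspace μ) * μ ^ k := by
  classical
  have hmaps (μ : K) := f.mapsTo_maxGenEigenspace_of_comm (Commute.pow_right rfl k) μ
  rw [trace_eq_sum_trace_restrict' (DirectSum.isInternal_submodule_of_iSupIndep_of_iSup_eq_top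
    f.independent_maxGenEigenspace f.iSup_maxGenEigenspace_eq_top) hf hmaps]
  refine Finset.sum_congr rfl fun μ _ ↦ ?_
  rw [← pow_restrict k (f.mapsTo_maxGenEigenspace_of_comm rfl μ),
    trace_pow_restrict_maxGenEigenspace, mul_comm]

lemma isNilpotent_of_forall_ne_zero_maxGenEigenspace_eq_bot [IsAlgClosed K] (f : End K V)
    (hf : ∀ μ ≠ 0, f.maxGenEigenspace μ = ⊥) : IsNilpotent f := by
  have htop : f.maxGenEigenspace 0 = ⊤ := by
    rw [eq_top_iff, ← f.iSup_maxGenEigenspace_eq_top]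
    refine iSup_le fun μ ↦ ?_
    rcases eq_or_ne μ 0 with rfl | hμ
    · rfl
    · simp [hf μ hμ]
  refine ((LinearMap.charpoly_nilpotent_tfae f).out 0 2).mpr fun x ↦ ?_
  obtain ⟨k, hk⟩ := (f.mem_maxGenEigenspace 0 x).mp (htop ▸ Submodule.mem_top)
  exact ⟨k, by simpa using hk⟩

lemma isNilpotent_of_forall_trace_pow_succ_eq_zero [IsAlgClosed K] [CharZero K] (f : End K V)
    (h : ∀ k : ℕ, trace K V (f ^ (k + 1)) = 0) : IsNilpotent f := by
  have hfin : {μ | f.maxGenEigenspace μ ≠ ⊥}.Finite :=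
    WellFoundedGT.finite_ne_bot_of_iSupIndep f.independent_maxGenEigenspace
  have hweights := Finset.eq_zero_of_forall_sum_mul_pow_eq_zero
    (w := fun μ ↦ finrank K (f.maxGenEigenspace μ) * μ) fun k ↦ by
      simpa only [mul_assoc, ← pow_succ', trace_pow_eq_sum_finrank_maxGenEigenspace_mul_pow f hfin]
        using h k
  refine isNilpotent_of_forall_ne_zero_maxGenEigenspace_eq_bot f fun μ hμ ↦ ?_
  by_contra hne
  simpa [hμ, hne] using hweights μ (hfin.mem_toFinset.mpr hne)

end Module.End

namespace Matrix

variable {ι K : Type*} [Fintype ι] [DecidableEq ι] [Field K]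

lemma isNilpotent_of_forall_trace_pow_succ_eq_zero [IsAlgClosed K] [CharZero K]
    (x : Matrix ι ι K) (h : ∀ k : ℕ, trace (x ^ (k + 1)) = 0) : IsNilpotent x := by
  rw [← IsNilpotent.map_iff (f := toLinAlgEquiv' (R := K) (n := ι)) (AlgEquiv.injective _)]
  refine Module.End.isNilpotent_of_forall_trace_pow_succ_eq_zero _ fun k ↦ ?_
  rw [← map_pow]
  exact (trace_toLin'_eq _).trans (h k)

lemma eq_zero_of_isNilpotent_of_mulVec_eq_self {R : Type*} [CommRing R] {y : Matrix ι ι R}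
    (hy : IsNilpotent y) {v : ι → R} (hv : y *ᵥ v = v) : v = 0 := by
  obtain ⟨k, hk⟩ := hy
  have hfix : ∀ j : ℕ, (y ^ j) *ᵥ v = v := fun j ↦ by
    induction j with
    | zero => rw [pow_zero, one_mulVec]
    | succ j ih => rw [pow_succ', ← mulVec_mulVec, ih, hv]
  rw [← hfix k, hk, zero_mulVec]

variable {A : Subalgebra K (Matrix ι ι K)}

lemma exists_mem_mulVec_eq_of_ne_zero
    (hA : ∀ W : Submodule K (ι → K), (∀ a ∈ A, ∀ v ∈ W, a *ᵥ v ∈ W) → W = ⊥ ∨ W = ⊤)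
    {w : ι → K} (hw : w ≠ 0) (v : ι → K) : ∃ a ∈ A, a *ᵥ w = v := by
  let orbit : Submodule K (ι → K) :=
    (Subalgebra.toSubmodule A).map ((LinearMap.applyₗ w).comp (toLin' : _ ≃ₗ[K] _).toLinearMap)
  have hmem : ∀ u, u ∈ orbit ↔ ∃ a ∈ A, a *ᵥ w = u := fun u ↦ by simp [orbit]
  have hinv : ∀ b ∈ A, ∀ u ∈ orbit, b *ᵥ u ∈ orbit := by
    rintro b hb u hu
    obtain ⟨a, ha, rfl⟩ := (hmem u).mp hu
    exact (hmem _).mpr ⟨b * a, A.mul_mem hb ha, (mulVec_mulVec w b a).symm⟩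
  have hw_mem : w ∈ orbit := (hmem w).mpr ⟨1, A.one_mem, one_mulVec w⟩
  rcases hA orbit hinv with hbot | htop
  · exact absurd ((Submodule.mem_bot K).mp (hbot ▸ hw_mem)) hw
  · exact (hmem v).mp (htop ▸ Submodule.mem_top)

lemma eq_zero_of_forall_trace_mul_eq_zero [IsAlgClosed K] [CharZero K]
    (hA : ∀ W : Submodule K (ι → K), (∀ a ∈ A, ∀ v ∈ W, a *ᵥ v ∈ W) → W = ⊥ ∨ W = ⊤)
    {x : Matrix ι ι K} (hx : x ∈ A) (h : ∀ a ∈ A, trace (x * a) = 0) : x = 0 := by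
  have hnil : ∀ a ∈ A, IsNilpotent (a * x) := fun a ha ↦
    isNilpotent_of_forall_trace_pow_succ_eq_zero _ fun k ↦ by
      rw [pow_succ, ← mul_assoc, trace_mul_comm]
      exact h _ (A.mul_mem (A.pow_mem (A.mul_mem ha hx) k) ha)
  by_contra hx0
  obtain ⟨v, hv⟩ : ∃ v, x *ᵥ v ≠ 0 := by
    by_contra! hv
    exact hx0 (ext_iff_mulVec.mpr fun v ↦ by rw [hv, zero_mulVec])
  obtain ⟨a, ha, hav⟩ := exists_mem_mulVec_eq_of_ne_zero hA hv v
  rw [mulVec_mulVec] at hav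
  exact hv (by rw [eq_zero_of_isNilpotent_of_mulVec_eq_self (hnil a ha) hav, mulVec_zero])

end Matrix

namespace Matrix.GeneralLinearGroup

variable {ι K : Type*} [Fintype ι] [DecidableEq ι] [Field K]

lemma exists_finite_trace_mul_injective [IsAlgClosed K] [CharZero K] (G : Subgroup (GL ι K))
    (hirr : ∀ W : Submodule K (ι → K),
      (∀ g ∈ G, ∀ v ∈ W, (g : Matrix ι ι K) *ᵥ v ∈ W) → W = ⊥ ∨ W = ⊤) :
    ∃ s : Set G, s.Finite ∧ Function.Injective fun (g : G) (h : s) ↦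
      trace (((g : GL ι K) : Matrix ι ι K) * ((h : GL ι K) : Matrix ι ι K)) := by
  let v : G →* Matrix ι ι K := (Units.coeHom _).comp G.subtype
  let A := Algebra.adjoin K (Set.range v)
  have hvA (g : G) : v g ∈ A := Algebra.subset_adjoin ⟨g, rfl⟩
  have hA : Subalgebra.toSubmodule A = Submodule.span K (Set.range v) := by
    rw [Algebra.adjoin_eq_span, ← MonoidHom.coe_mrange, Submonoid.closure_eq]
  obtain ⟨κ, e, -, hspan, hind⟩ := exists_linearIndependent' K v
  have : Finite κ := hind.finite
  refine ⟨Set.range e, Set.finite_range e, fun g g' hgg' ↦ ?_⟩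
  let φ := traceLinearMap ι K K ∘ₗ LinearMap.mulLeft K (v g - v g')
  have hφ : Submodule.span K (Set.range (v ∘ e)) ≤ LinearMap.ker φ := by
    refine Submodule.span_le.mpr (Set.range_subset_iff.mpr fun i ↦ ?_)
    simpa [φ, v, sub_mul, sub_eq_zero] using congrFun hgg' ⟨e i, i, rfl⟩
  have htr : ∀ a ∈ A, trace ((v g - v g') * a) = 0 := fun a ha ↦
    hφ (hspan ▸ hA ▸ ha)
  have hirrA : ∀ W : Submodule K (ι → K), (∀ a ∈ A, ∀ u ∈ W, a *ᵥ u ∈ W) → W = ⊥ ∨ W = ⊤ :=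
    fun W hW ↦ hirr W fun g hg ↦ hW _ (hvA ⟨g, hg⟩)
  have := eq_zero_of_forall_trace_mul_eq_zero hirrA (A.sub_mem (hvA g) (hvA g')) htr
  exact Subtype.ext (Units.ext (sub_eq_zero.mp this))

end Matrix.GeneralLinearGroup

/-- **Burnside's finiteness theorem for groups with finitely many traces.**
Let `G ⊆ GL(n, ℂ)` be a group acting irreducibly on `ℂⁿ` such that the set of traces
`{tr g : g ∈ G}` is finite.  Then `G` is finite. -/
theorem burnside_finite_traces
    (n : ℕ) (G : Subgroup (Matrix.GeneralLinearGroup (Fin n) ℂ))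
    (hirr : ∀ W : Submodule ℂ (Fin n → ℂ),
      (∀ g ∈ G, ∀ v ∈ W, Matrix.mulVec (g : Matrix (Fin n) (Fin n) ℂ) v ∈ W) →
      W = ⊥ ∨ W = ⊤)
    (hfin : {t : ℂ | ∃ g ∈ G, Matrix.trace (g : Matrix (Fin n) (Fin n) ℂ) = t}.Finite) :
    Finite G := by
  obtain ⟨s, hs, hinj⟩ := Matrix.GeneralLinearGroup.exists_finite_trace_mul_injective G hirr
  have : Finite s := hs.to_subtype
  set T := {t : ℂ | ∃ g ∈ G, Matrix.trace (g : Matrix (Fin n) (Fin n) ℂ) = t}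
  have : Finite T := hfin.to_subtype
  refine Finite.of_injective (fun (g : G) (h : s) ↦ (⟨_, g * h, G.mul_mem g.2 h.1.2, rfl⟩ : T))
    fun g g' hgg' ↦ hinj (funext fun h ↦ ?_)
  simpa using congrArg Subtype.val (congrFun hgg' h)
end

section
/- Let C be a K-linear abelian category, L/K a finite Galois extension with group G, and M an object of the base-changed category C_L such that End_{C_L}(M) ≅ L and M ≅ ᵍM for all g ∈ G. Given a choice of isomorphisms c_g : M → ᵍM, the function ξ(g,h) = c_{gh}^{-1} ∘ ᵍc_h ∘ c_g, valued in Aut(M) ≅ L^*, is a 2-cocycle: ᵍ¹ξ(g₂,g₃)·ξ(g₁,g₂g₃) = ξ(g₁g₂,g₃)·ξ(g₁,g₂). -/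
/-!
For `f : M ⟶ ᵍM` and `f' : M ⟶ ʰM` put `f ⋆ f' := f ≫ ᵍf' : M ⟶ ᵍʰM` (`twistComp`). Since the
twisting functors compose strictly, `⋆` is associative up to the identification
`ᵍ⁽ʰᵏ⁾M = ⁽ᵍʰ⁾ᵏM`; it is linear in `f` and `g`-semilinear in `f'`. The defining relation
`c_g ⋆ c_h = ξ(g,h) • c_{gh}` expands `(c_{g₁} ⋆ c_{g₂}) ⋆ c_{g₃}` and `c_{g₁} ⋆ (c_{g₂} ⋆ c_{g₃})`
into the two sides of the cocycle identity times `c_{g₁g₂g₃}`, and scalars can be read off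
because `a ↦ a • 𝟙 M` is injective.
-/

open CategoryTheory

namespace CategoryTheory

theorem comp_eqToHom_congrArg {C : Type*} [Category C] {G : Type*} {X : C} {F : G → C}
    (f : ∀ g, X ⟶ F g) {g k : G} (h : g = k) : f g ≫ eqToHom (congrArg F h) = f k := by
  subst h
  simp

theorem Iso.smul_hom_injective {L : Type*} [Semiring L] {C : Type*} [Category C]
    [Preadditive C] [Linear L C] {X Y : C} (hX : Function.Injective fun a : L => a • 𝟙 X)
    (α : X ≅ Y) : Function.Injective fun a : L => a • α.hom := by
  intro a b hab
  apply hX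
  simpa only [Linear.smul_comp, Iso.hom_inv_id] using congrArg (· ≫ α.inv) hab

section Twist

variable {G : Type*} [Monoid G] {C : Type*} [Category C]
  (ρ : G → C ⥤ C) (hmul : ∀ g h, ρ (g * h) = ρ h ⋙ ρ g)

def twistComp {X : C} {g h : G} (f : X ⟶ (ρ g).obj X) (f' : X ⟶ (ρ h).obj X) :
    X ⟶ (ρ (g * h)).obj X :=
  f ≫ (ρ g).map f' ≫ eqToHom (Functor.congr_obj (hmul g h) X).symm

variable {ρ}

theorem twistComp_assoc {X : C} {g₁ g₂ g₃ : G} (f₁ : X ⟶ (ρ g₁).obj X)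
    (f₂ : X ⟶ (ρ g₂).obj X) (f₃ : X ⟶ (ρ g₃).obj X) :
    twistComp ρ hmul (twistComp ρ hmul f₁ f₂) f₃ =
      twistComp ρ hmul f₁ (twistComp ρ hmul f₂ f₃) ≫
        eqToHom (congrArg (fun g => (ρ g).obj X) (mul_assoc g₁ g₂ g₃).symm) := by
  simp only [twistComp, Functor.map_comp, eqToHom_map, Category.assoc, eqToHom_trans,
    eqToHom_trans_assoc, eqToHom_refl, Category.id_comp, Functor.congr_hom (hmul g₁ g₂) f₃,
    Functor.comp_map]

variable {L : Type*} [Semiring L] [Preadditive C] [Linear L C]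

theorem twistComp_smul_left {X : C} {g h : G} (a : L) (f : X ⟶ (ρ g).obj X)
    (f' : X ⟶ (ρ h).obj X) :
    twistComp ρ hmul (a • f) f' = a • twistComp ρ hmul f f' :=
  Linear.smul_comp _ _ _ _ _ _

theorem twistComp_smul_right [SMul G L]
    (hsemi : ∀ (g : G) (X Y : C) (f : X ⟶ Y) (a : L), (ρ g).map (a • f) = (g • a) • (ρ g).map f)
    {X : C} {g h : G} (a : L) (f : X ⟶ (ρ g).obj X) (f' : X ⟶ (ρ h).obj X) :
    twistComp ρ hmul f (a • f') = (g • a) • twistComp ρ hmul f f' := by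
  simp only [twistComp, hsemi, Linear.smul_comp, Linear.comp_smul]

theorem cocycle_of_twistComp_eq_smul [SMul G L]
    (hsemi : ∀ (g : G) (X Y : C) (f : X ⟶ Y) (a : L), (ρ g).map (a • f) = (g • a) • (ρ g).map f)
    {M : C} (hEnd : Function.Injective fun a : L => a • 𝟙 M) (c : ∀ g, M ≅ (ρ g).obj M)
    (ξ : G → G → L)
    (hξ : ∀ g h, twistComp ρ hmul (c g).hom (c h).hom = ξ g h • (c (g * h)).hom)
    (g₁ g₂ g₃ : G) :
    ξ g₁ g₂ * ξ (g₁ * g₂) g₃ = g₁ • ξ g₂ g₃ * ξ g₁ (g₂ * g₃) := by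
  apply Iso.smul_hom_injective hEnd (c (g₁ * g₂ * g₃))
  calc (ξ g₁ g₂ * ξ (g₁ * g₂) g₃) • (c (g₁ * g₂ * g₃)).hom
      = twistComp ρ hmul (twistComp ρ hmul (c g₁).hom (c g₂).hom) (c g₃).hom := by
        rw [hξ g₁ g₂, twistComp_smul_left, hξ (g₁ * g₂) g₃, smul_smul]
    _ = twistComp ρ hmul (c g₁).hom (twistComp ρ hmul (c g₂).hom (c g₃).hom) ≫
          eqToHom _ := twistComp_assoc hmul _ _ _
    _ = (g₁ • ξ g₂ g₃ * ξ g₁ (g₂ * g₃)) • (c (g₁ * g₂ * g₃)).hom := by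
        rw [hξ g₂ g₃, twistComp_smul_right hmul hsemi, hξ g₁ (g₂ * g₃), smul_smul,
          Linear.smul_comp, comp_eqToHom_congrArg (fun g => (c g).hom) (mul_assoc _ _ _).symm]

end Twist

end CategoryTheory

/-- **The descent function `ξ_{M,c}` is a 2-cocycle.**
Let `C` be (the base change to `L` of) a `K`-linear abelian category, `L/K` a finite
Galois extension with group `G = Gal(L/K)` acting on `C` by the (strict) twisting
functors `ρ g` (which are `g`-semilinear on Hom-spaces), and let `M` be an object with
`End(M) ≅ L` and `M ≅ ᵍM` for all `g`.  Given a choice of isomorphisms `c g : M ≅ ᵍM`,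
the function `ξ(g,h) ∈ L^*` determined by
`c_{gh}⁻¹ ∘ ᵍc_h ∘ c_g = ξ(g,h) • 𝟙 M`
satisfies the 2-cocycle identity `ᵍ¹ξ(g₂,g₃) · ξ(g₁, g₂g₃) = ξ(g₁g₂, g₃) · ξ(g₁,g₂)`. -/
theorem descent_xi_is_cocycle
    (K L : Type*) [Field K] [Field L] [Algebra K L]
    (C : Type*) [Category C] [Preadditive C] [Linear L C]
    (ρ : (L ≃ₐ[K] L) → C ⥤ C)
    (hmul : ∀ g h : L ≃ₐ[K] L, ρ (g * h) = ρ h ⋙ ρ g)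
    (hsemi : ∀ (g : L ≃ₐ[K] L) (X Y : C) (f : X ⟶ Y) (a : L),
      (ρ g).map (a • f) = g a • (ρ g).map f)
    (M : C)
    (hEnd : Function.Bijective (fun a : L => a • (𝟙 M)))
    (c : ∀ g : L ≃ₐ[K] L, M ≅ (ρ g).obj M)
    (ξ : (L ≃ₐ[K] L) → (L ≃ₐ[K] L) → L)
    (hξ : ∀ g h : L ≃ₐ[K] L,
      (c g).hom ≫ (ρ g).map (c h).hom ≫
        eqToHom (show (ρ g).obj ((ρ h).obj M) = (ρ (g * h)).obj M by
          rw [hmul g h]; rfl) ≫ (c (g * h)).inv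
        = ξ g h • 𝟙 M) :
    ∀ g₁ g₂ g₃ : L ≃ₐ[K] L,
      g₁ (ξ g₂ g₃) * ξ g₁ (g₂ * g₃) = ξ (g₁ * g₂) g₃ * ξ g₁ g₂ := by
  intro g₁ g₂ g₃
  have hξ_twistComp (g h : L ≃ₐ[K] L) :
      twistComp ρ hmul (c g).hom (c h).hom = ξ g h • (c (g * h)).hom := by
    rw [twistComp, ← Category.id_comp (c (g * h)).hom, ← Linear.smul_comp, ← Iso.comp_inv_eq]
    simpa only [Category.assoc] using hξ g h
  rw [mul_comm (ξ (g₁ * g₂) g₃)]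
  exact (cocycle_of_twistComp_eq_smul hmul hsemi hEnd.injective c ξ hξ_twistComp g₁ g₂ g₃).symm
end

section
/- With C, L/K, G, M as above (End(M) ≅ L, all Galois twists of M isomorphic to M), if for some choice of isomorphisms c_g : M → ᵍM the 2-cocycle ξ(g,h) = c_{gh}^{-1} ∘ ᵍc_h ∘ c_g is a coboundary, then M descends to C: there is an object N of C with Ind_K^L(N) ≅ M. -/
/-!
Rescaling the isomorphisms `c g` by `(α g)⁻¹` multiplies the cocycle composite
`c g ≫ ᵍ(c h) ≫ c (gh)⁻¹` by `(α g)⁻¹ · ᵍ(α h)⁻¹ · α (gh)` (the twisting functors are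
`g`-semilinear), and the coboundary relation makes that scalar `ξ(g,h)⁻¹`. So the rescaled
isomorphisms form a descent datum, which is effective by Galois descent.
-/

open CategoryTheory

namespace CategoryTheory

section Rescale

variable {L : Type*} [Field L] {C : Type*} [Category C] [Preadditive C] [Linear L C]

@[simps]
def Iso.smulOfNeZero {X Y : C} (e : X ≅ Y) (a : L) (ha : a ≠ 0) : X ≅ Y where
  hom := a • e.hom
  inv := a⁻¹ • e.inv
  hom_inv_id := by
    rw [Linear.smul_comp, Linear.comp_smul, smul_smul, mul_inv_cancel₀ ha, one_smul,
      Iso.hom_inv_id]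
  inv_hom_id := by
    rw [Linear.smul_comp, Linear.comp_smul, smul_smul, inv_mul_cancel₀ ha, one_smul,
      Iso.inv_hom_id]

lemma eq_smul_hom_of_comp_inv_eq_smul_id {X Y : C} {f : X ⟶ Y} {e : X ≅ Y} {a : L}
    (h : f ≫ e.inv = a • 𝟙 X) : f = a • e.hom := by
  simpa [Linear.smul_comp] using congrArg (· ≫ e.hom) h

end Rescale

section Descent

variable {K L : Type*} [CommSemiring K] [Field L] [Algebra K L]
  {C : Type*} [Category C] [Preadditive C] [Linear L C]
  (ρ : (L ≃ₐ[K] L) → C ⥤ C) (hmul : ∀ g h : L ≃ₐ[K] L, ρ (g * h) = ρ h ⋙ ρ g)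

def descentComp {X : C} (dat : ∀ g : L ≃ₐ[K] L, X ≅ (ρ g).obj X) (g h : L ≃ₐ[K] L) :
    X ⟶ (ρ (g * h)).obj X :=
  (dat g).hom ≫ (ρ g).map (dat h).hom ≫
    eqToHom (show (ρ g).obj ((ρ h).obj X) = (ρ (g * h)).obj X by rw [hmul g h]; rfl)

def IsDescentDatum {X : C} (dat : ∀ g : L ≃ₐ[K] L, X ≅ (ρ g).obj X) : Prop :=
  ∀ g h : L ≃ₐ[K] L, (dat (g * h)).hom = descentComp ρ hmul dat g h

variable {ρ}

lemma descentComp_smulOfNeZero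
    (hsemi : ∀ (g : L ≃ₐ[K] L) (X Y : C) (f : X ⟶ Y) (a : L),
      (ρ g).map (a • f) = g a • (ρ g).map f)
    {X : C} (c : ∀ g : L ≃ₐ[K] L, X ≅ (ρ g).obj X) (a : (L ≃ₐ[K] L) → L)
    (ha : ∀ g, a g ≠ 0) (g h : L ≃ₐ[K] L) :
    descentComp ρ hmul (fun g => (c g).smulOfNeZero (a g) (ha g)) g h =
      (g (a h) * a g) • descentComp ρ hmul c g h := by
  simp only [descentComp, Iso.smulOfNeZero_hom, hsemi, Linear.smul_comp, Linear.comp_smul,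
    smul_smul]

lemma isDescentDatum_smulOfNeZero_of_isCoboundary
    (hsemi : ∀ (g : L ≃ₐ[K] L) (X Y : C) (f : X ⟶ Y) (a : L),
      (ρ g).map (a • f) = g a • (ρ g).map f)
    {X : C} (c : ∀ g : L ≃ₐ[K] L, X ≅ (ρ g).obj X) (ξ : (L ≃ₐ[K] L) → (L ≃ₐ[K] L) → L)
    (hξ : ∀ g h, descentComp ρ hmul c g h ≫ (c (g * h)).inv = ξ g h • 𝟙 X)
    (α : (L ≃ₐ[K] L) → L) (hα : ∀ g, α g ≠ 0)
    (hcob : ∀ g h : L ≃ₐ[K] L, ξ g h * α (g * h) = g (α h) * α g) :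
    IsDescentDatum ρ hmul (fun g => (c g).smulOfNeZero (α g)⁻¹ (inv_ne_zero (hα g))) := by
  intro g h
  have hscalar : (g (α h))⁻¹ * (α g)⁻¹ * ξ g h = (α (g * h))⁻¹ := by
    have hgα : g (α h) ≠ 0 := (map_ne_zero g).mpr (hα h)
    field_simp [hα g, hα (g * h)]
    linear_combination hcob g h
  rw [descentComp_smulOfNeZero hmul hsemi, eq_smul_hom_of_comp_inv_eq_smul_id (hξ g h),
    smul_smul, map_inv₀, hscalar]
  rfl

end Descent

end CategoryTheory

/-- **Coboundary implies descent.**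
Setup: `L/K` finite Galois with group `G`, `C` (the base change `C_L` of a `K`-linear
abelian category `C₀`) carries a strict `G`-action by twisting functors `ρ g`
(`g`-semilinear on Hom-spaces), `Ind : C₀ ⥤ C` is the induction functor, and Galois
descent holds: every descent datum is effective.  Let `M ∈ C` with `End(M) ≅ L` and
isomorphisms `c g : M ≅ ᵍM` with associated 2-cocycle `ξ`.  If `ξ` is a coboundary
(`ξ(g,h) = ᵍα(h)·α(g)/α(gh)` for some `α : G → L^*`), then `M` is in the essential
image of `Ind`, i.e. `M` descends. -/
theorem coboundary_implies_descent
    (K L : Type*) [Field K] [Field L] [Algebra K L]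
    (C : Type*) [Category C] [Preadditive C] [Linear L C]
    (ρ : (L ≃ₐ[K] L) → C ⥤ C)
    (hmul : ∀ g h : L ≃ₐ[K] L, ρ (g * h) = ρ h ⋙ ρ g)
    (hsemi : ∀ (g : L ≃ₐ[K] L) (X Y : C) (f : X ⟶ Y) (a : L),
      (ρ g).map (a • f) = g a • (ρ g).map f)
    (C₀ : Type*) [Category C₀] (Ind : C₀ ⥤ C)
    (hdesc : ∀ (X : C) (dat : ∀ g : L ≃ₐ[K] L, X ≅ (ρ g).obj X),
      (∀ g h : L ≃ₐ[K] L,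
        (dat (g * h)).hom =
          (dat g).hom ≫ (ρ g).map (dat h).hom ≫
            eqToHom (show (ρ g).obj ((ρ h).obj X) = (ρ (g * h)).obj X by
              rw [hmul g h]; rfl)) →
      ∃ N : C₀, Nonempty (Ind.obj N ≅ X))
    (M : C)
    (c : ∀ g : L ≃ₐ[K] L, M ≅ (ρ g).obj M)
    (ξ : (L ≃ₐ[K] L) → (L ≃ₐ[K] L) → L)
    (hξ : ∀ g h : L ≃ₐ[K] L,
      (c g).hom ≫ (ρ g).map (c h).hom ≫
        eqToHom (show (ρ g).obj ((ρ h).obj M) = (ρ (g * h)).obj M by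
          rw [hmul g h]; rfl) ≫ (c (g * h)).inv
        = ξ g h • 𝟙 M)
    (α : (L ≃ₐ[K] L) → L) (hα : ∀ g, α g ≠ 0)
    (hcob : ∀ g h : L ≃ₐ[K] L, ξ g h * α (g * h) = g (α h) * α g) :
    ∃ N : C₀, Nonempty (Ind.obj N ≅ M) :=
  hdesc M (fun g => (c g).smulOfNeZero (α g)⁻¹ (inv_ne_zero (hα g))) <|
    isDescentDatum_smulOfNeZero_of_isCoboundary hmul hsemi c ξ
      (fun g h => by simpa only [descentComp, Category.assoc] using hξ g h) α hα hcob
end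

section
/- Let q = p^d and let V be a free module over Q_q ⊗_{Q_p} Q̄_p (where Q̄_p is an algebraic closure of Q_p) of rank ≥ 2, with F : V → V a (σ⊗1)-semilinear bijection. Then (V, F) has a nonzero proper sub-object stable under F that is free over Q_q ⊗ Q̄_p; equivalently, every simple F-isocrystal on F_q with coefficients in Q̄_p has rank 1. -/
/-!
Let `A = L ⊗[k] K` with `L/k` finite Galois, `Gal(L/k)` generated by `σ`, and `K` algebraically
closed. Fixing an embedding `ι : L → K`, the characters `a ⊗ c ↦ ι (g a) * c` for `g ∈ Gal(L/k)`
identify `A` with `∏_g K`, and `σ ⊗ 1` permutes the factors transitively; hence `0` and `A` are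
the only `(σ ⊗ 1)`-stable ideals of `A`. The semilinear map `F` is `K`-linear, so it has an
eigenvector `v`. Since `F` is injective, the annihilator of `v` is `(σ ⊗ 1)`-stable, hence zero,
and `A ∙ v ≅ A` is a free `F`-stable submodule, proper because the rank is at least `2`.
-/

open TensorProduct

theorem Ideal.eq_top_of_forall_exists_apply_ne_zero {R ι K : Type*} [CommRing R] [Fintype ι]
    [Field K] (Φ : R ≃+* (ι → K)) (I : Ideal R) (h : ∀ i, ∃ x ∈ I, Φ x i ≠ 0) : I = ⊤ := by
  classical
  choose x hxI hx using h
  have hone : ∑ i, Φ.symm (Pi.single i (Φ (x i) i)⁻¹) * x i = 1 := by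
    apply Φ.injective
    ext j
    simp [Finset.sum_apply, Pi.single_apply, hx]
  rw [Ideal.eq_top_iff_one, ← hone]
  exact Ideal.sum_mem _ fun i _ => I.mul_mem_left _ (hxI i)

namespace Algebra.TensorProduct

variable {k L K : Type*} [Field k] [Field L] [Algebra k L] [Field K] [Algebra k K]

attribute [local instance] rightAlgebra

def galoisCharacter (ι : L →ₐ[k] K) (g : L ≃ₐ[k] L) : L ⊗[k] K →ₐ[K] K :=
  { productMap (ι.comp g.toAlgHom) (AlgHom.id k K) with
    commutes' := fun c => by simp [right_algebraMap_apply] }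

@[simp]
theorem galoisCharacter_tmul (ι : L →ₐ[k] K) (g : L ≃ₐ[k] L) (a : L) (c : K) :
    galoisCharacter ι g (a ⊗ₜ c) = ι (g a) * c := by
  simp [galoisCharacter]

theorem galoisCharacter_congr (ι : L →ₐ[k] K) (g g' : L ≃ₐ[k] L) (x : L ⊗[k] K) :
    galoisCharacter ι g (congr g' AlgEquiv.refl x) = galoisCharacter ι (g * g') x := by
  induction x with
  | zero => simp
  | tmul a c => simp
  | add x y hx hy => simp only [map_add, hx, hy]

theorem galoisCharacter_injective (ι : L →ₐ[k] K) : Function.Injective (galoisCharacter ι) := by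
  intro g g' h
  ext a
  apply ι.injective
  simpa using DFunLike.congr_fun h (a ⊗ₜ 1)

theorem bijective_pi_galoisCharacter [IsGalois k L] [FiniteDimensional k L] (ι : L →ₐ[k] K) :
    Function.Bijective (AlgHom.pi (galoisCharacter ι)) := by
  have hli : LinearIndependent K fun g => ⇑(galoisCharacter ι g) :=
    (linearIndependent_monoidHom (L ⊗[k] K) K).comp _ fun g g' h =>
      galoisCharacter_injective ι (AlgHom.ext (DFunLike.congr_fun h :))
  -- Dedekind independence gives surjectivity; both sides have `K`-dimension `[L : k]`.
  have hsurj : Function.Surjective (AlgHom.pi (galoisCharacter ι)) := by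
    have hle : Submodule.span K (Set.range (flip fun g => ⇑(galoisCharacter ι g))) ≤
        LinearMap.range (AlgHom.pi (galoisCharacter ι)).toLinearMap :=
      Submodule.span_le.mpr (Set.range_subset_iff.mpr fun x => ⟨x, rfl⟩)
    intro y
    exact hle (span_flip_eq_top_iff_linearIndependent.mpr hli ▸ Submodule.mem_top)
  have : Module.Finite K (L ⊗[k] K) := .equiv (commRight k K L).toLinearEquiv
  refine ⟨?_, hsurj⟩
  rw [← AlgHom.coe_toLinearMap, LinearMap.injective_iff_surjective_of_finrank_eq_finrank]
  · exact hsurj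
  rw [← (commRight k K L).toLinearEquiv.finrank_eq, Module.finrank_baseChange,
    Module.finrank_fintype_fun_eq_card, ← Nat.card_eq_fintype_card, IsGalois.card_aut_eq_finrank]

theorem congr_refl_algebraMap (σ : L ≃ₐ[k] L) (c : K) :
    congr σ AlgEquiv.refl (algebraMap K (L ⊗[k] K) c) = algebraMap K (L ⊗[k] K) c := by
  simp [right_algebraMap_apply]

noncomputable def galoisEquivPi [IsGalois k L] [FiniteDimensional k L] (ι : L →ₐ[k] K) :
    L ⊗[k] K ≃ₐ[K] ((L ≃ₐ[k] L) → K) :=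
  AlgEquiv.ofBijective _ (bijective_pi_galoisCharacter ι)

theorem galoisEquivPi_apply [IsGalois k L] [FiniteDimensional k L] (ι : L →ₐ[k] K)
    (x : L ⊗[k] K) (g : L ≃ₐ[k] L) : galoisEquivPi ι x g = galoisCharacter ι g x :=
  rfl

theorem galoisEquivPi_congr_pow [IsGalois k L] [FiniteDimensional k L] (ι : L →ₐ[k] K)
    (σ : L ≃ₐ[k] L) (m : ℕ) (x : L ⊗[k] K) (g : L ≃ₐ[k] L) :
    galoisEquivPi ι ((congr σ AlgEquiv.refl ^ m) x) g = galoisEquivPi ι x (g * σ ^ m) := by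
  induction m generalizing g with
  | zero => simp
  | succ m ih =>
    rw [pow_succ', AlgEquiv.mul_apply, galoisEquivPi_apply, galoisCharacter_congr,
      ← galoisEquivPi_apply, ih, mul_assoc, ← pow_succ']

theorem ideal_eq_bot_or_eq_top_of_congr_mem [IsGalois k L] [FiniteDimensional k L]
    [IsAlgClosed K] {σ : L ≃ₐ[k] L} (hσ : ∀ g, g ∈ Subgroup.zpowers σ)
    (I : Ideal (L ⊗[k] K)) (hI : ∀ x ∈ I, congr σ AlgEquiv.refl x ∈ I) : I = ⊥ ∨ I = ⊤ := by
  refine or_iff_not_imp_left.mpr fun hI0 => ?_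
  obtain ⟨x, hxI, hx0⟩ := Submodule.exists_mem_ne_zero_of_ne_bot hI0
  have : Algebra.IsAlgebraic k L := Algebra.IsAlgebraic.of_finite k L
  let Φ := galoisEquivPi (IsAlgClosed.lift : L →ₐ[k] K)
  obtain ⟨g₀, hg₀⟩ : ∃ g₀, Φ x g₀ ≠ 0 := by
    by_contra! h
    exact hx0 (Φ.injective (by rw [map_zero]; exact funext h))
  refine Ideal.eq_top_of_forall_exists_apply_ne_zero Φ.toRingEquiv I fun g => ?_
  obtain ⟨m, hm : σ ^ m = g⁻¹ * g₀⟩ := mem_powers_iff_mem_zpowers.mpr (hσ (g⁻¹ * g₀))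
  have hpow : ∀ n : ℕ, (congr σ AlgEquiv.refl ^ n) x ∈ I := by
    intro n
    induction n with
    | zero => exact hxI
    | succ n ih => rw [pow_succ', AlgEquiv.mul_apply]; exact hI _ ih
  refine ⟨_, hpow m, ?_⟩
  show Φ _ g ≠ 0
  rwa [galoisEquivPi_congr_pow, hm, mul_inv_cancel_left]

end Algebra.TensorProduct

theorem Submodule.span_singleton_ne_top_of_one_lt_finrank {R V : Type*} [CommRing R]
    [StrongRankCondition R] [AddCommGroup V] [Module R V] (h : 1 < Module.finrank R V) (v : V) :
    R ∙ v ≠ ⊤ := by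
  intro htop
  have hle := finrank_span_le_card (R := R) ({v} : Set V)
  rw [htop, finrank_top, Set.toFinset_singleton, Finset.card_singleton] at hle
  omega

theorem Module.free_span_singleton_of_torsionOf_eq_bot {R V : Type*} [CommRing R]
    [AddCommGroup V] [Module R V] {v : V} (hv : Ideal.torsionOf R V v = ⊥) :
    Module.Free R (R ∙ v) :=
  .of_equiv ((Submodule.quotEquivOfEqBot _ hv).symm ≪≫ₗ Ideal.quotTorsionOfEquivSpanSingleton R V v)

theorem exists_torsionOf_eq_bot_of_semilinear {K A V : Type*} [Field K] [IsAlgClosed K]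
    [CommRing A] [Algebra K A] [AddCommGroup V] [Module A V] [Module K V] [IsScalarTower K A V]
    [FiniteDimensional K V] [Nontrivial V] (τ : A →+* A)
    (hτK : ∀ c : K, τ (algebraMap K A c) = algebraMap K A c)
    (hτ : ∀ I : Ideal A, (∀ x ∈ I, τ x ∈ I) → I = ⊥ ∨ I = ⊤)
    (F : V →+ V) (hF : Function.Injective F) (hsemi : ∀ (a : A) (v : V), F (a • v) = τ a • F v) :
    ∃ v : V, v ≠ 0 ∧ Ideal.torsionOf A V v = ⊥ ∧ ∀ w ∈ A ∙ v, F w ∈ A ∙ v := by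
  let Fₗ : V →ₗ[K] V :=
    { F with
      map_smul' := fun c v => by
        simp only [AddMonoidHom.toFun_eq_coe, RingHom.id_apply]
        rw [← algebraMap_smul A c v, hsemi, hτK, algebraMap_smul] }
  obtain ⟨μ, hμ⟩ := Module.End.exists_eigenvalue Fₗ
  obtain ⟨v, hv⟩ := hμ.exists_hasEigenvector
  have hFv : F v = μ • v := hv.apply_eq_smul
  have hμ0 : μ ≠ 0 := by
    rintro rfl
    exact hv.right (hF (by rw [hFv, zero_smul, map_zero]))
  have htors : ∀ x ∈ Ideal.torsionOf A V v, τ x ∈ Ideal.torsionOf A V v := by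
    intro x hx
    rw [Ideal.mem_torsionOf_iff] at hx ⊢
    have h := hsemi x v
    rw [hx, map_zero, hFv, smul_comm] at h
    exact (smul_eq_zero.mp h.symm).resolve_left hμ0
  refine ⟨v, hv.right, (hτ _ htors).resolve_right ?_, ?_⟩
  · rw [Ideal.torsionOf_eq_top_iff]
    exact hv.right
  · intro w hw
    obtain ⟨a, rfl⟩ := Submodule.mem_span_singleton.mp hw
    rw [hsemi, hFv]
    exact Submodule.smul_mem _ _ <|
      Submodule.smul_of_tower_mem _ μ (Submodule.mem_span_singleton_self v)

attribute [local instance] Algebra.TensorProduct.rightAlgebra in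
theorem simple_isocrystal_rank_one_general
    (p : ℕ) [Fact p.Prime]
    (Qq : Type*) [Field Qq] [Algebra ℚ_[p] Qq] [IsGalois ℚ_[p] Qq]
    [FiniteDimensional ℚ_[p] Qq]
    (σ : Qq ≃ₐ[ℚ_[p]] Qq) (hσ : ∀ h : Qq ≃ₐ[ℚ_[p]] Qq, h ∈ Subgroup.zpowers σ)
    (V : Type*) [AddCommGroup V]
    [Module (Qq ⊗[ℚ_[p]] AlgebraicClosure ℚ_[p]) V]
    (r : ℕ) (hr : 2 ≤ r)
    (b : Module.Basis (Fin r) (Qq ⊗[ℚ_[p]] AlgebraicClosure ℚ_[p]) V)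
    (F : V → V)
    (hadd : ∀ x y : V, F (x + y) = F x + F y)
    (hbij : Function.Bijective F)
    (hsemi : ∀ (a : Qq ⊗[ℚ_[p]] AlgebraicClosure ℚ_[p]) (v : V),
      F (a • v) =
        (Algebra.TensorProduct.congr σ
          (AlgEquiv.refl : AlgebraicClosure ℚ_[p] ≃ₐ[ℚ_[p]] AlgebraicClosure ℚ_[p])) a
          • F v) :
    ∃ W : Submodule (Qq ⊗[ℚ_[p]] AlgebraicClosure ℚ_[p]) V,
      W ≠ ⊥ ∧ W ≠ ⊤ ∧ (∀ v ∈ W, F v ∈ W) ∧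
        Module.Free (Qq ⊗[ℚ_[p]] AlgebraicClosure ℚ_[p]) W := by
  let K := AlgebraicClosure ℚ_[p]
  let A := Qq ⊗[ℚ_[p]] K
  let τ : A ≃ₐ[ℚ_[p]] A := Algebra.TensorProduct.congr σ AlgEquiv.refl
  let _ : Module K V := Module.compHom V (algebraMap K A)
  have : IsScalarTower K A V := IsScalarTower.of_compHom K A V
  have : Module.Finite K A := .equiv (Algebra.TensorProduct.commRight ℚ_[p] K Qq).toLinearEquiv
  have : Module.Finite A V := .of_basis b
  have : Module.Finite K V := .trans A V
  have : Nontrivial V := nontrivial_of_ne (b ⟨0, by omega⟩) 0 (b.ne_zero _)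
  obtain ⟨v, hv0, htors, hstable⟩ := exists_torsionOf_eq_bot_of_semilinear (K := K) τ.toRingHom
    (Algebra.TensorProduct.congr_refl_algebraMap σ)
    (Algebra.TensorProduct.ideal_eq_bot_or_eq_top_of_congr_mem hσ) (AddMonoidHom.mk' F hadd)
    hbij.injective hsemi
  refine ⟨A ∙ v, Submodule.span_singleton_eq_bot.not.mpr hv0, ?_, hstable,
    Module.free_span_singleton_of_torsionOf_eq_bot htors⟩
  refine Submodule.span_singleton_ne_top_of_one_lt_finrank ?_ v
  rw [Module.finrank_eq_card_basis b, Fintype.card_fin]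
  omega

/-- **Simple `F`-isocrystals on `𝔽_q` with `ℚ̄_p`-coefficients have rank 1.**
Let `q = p^d` and let `Qq` be the unramified (cyclic Galois) extension of `ℚ_p` of
degree `d` with Frobenius generator `σ`.  Let `V` be a free module of rank `r ≥ 2`
over `Qq ⊗[ℚ_p] ℚ̄_p` with `F : V → V` a `(σ ⊗ 1)`-semilinear bijection.  Then
`(V, F)` has a nonzero proper `F`-stable sub-object that is free over
`Qq ⊗[ℚ_p] ℚ̄_p`; equivalently, every simple `F`-isocrystal on `𝔽_q` with
coefficients in `ℚ̄_p` has rank 1. -/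
theorem simple_isocrystal_rank_one
    (p d : ℕ) [Fact p.Prime]
    (Qq : Type*) [Field Qq] [Algebra ℚ_[p] Qq] [IsGalois ℚ_[p] Qq]
    [FiniteDimensional ℚ_[p] Qq] (hdeg : Module.finrank ℚ_[p] Qq = d)
    (σ : Qq ≃ₐ[ℚ_[p]] Qq) (hσ : ∀ h : Qq ≃ₐ[ℚ_[p]] Qq, h ∈ Subgroup.zpowers σ)
    (V : Type*) [AddCommGroup V]
    [Module (Qq ⊗[ℚ_[p]] AlgebraicClosure ℚ_[p]) V]
    (r : ℕ) (hr : 2 ≤ r)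
    (b : Module.Basis (Fin r) (Qq ⊗[ℚ_[p]] AlgebraicClosure ℚ_[p]) V)
    (F : V → V)
    (hadd : ∀ x y : V, F (x + y) = F x + F y)
    (hbij : Function.Bijective F)
    (hsemi : ∀ (a : Qq ⊗[ℚ_[p]] AlgebraicClosure ℚ_[p]) (v : V),
      F (a • v) =
        (Algebra.TensorProduct.congr σ
          (AlgEquiv.refl : AlgebraicClosure ℚ_[p] ≃ₐ[ℚ_[p]] AlgebraicClosure ℚ_[p])) a
          • F v) :
    ∃ W : Submodule (Qq ⊗[ℚ_[p]] AlgebraicClosure ℚ_[p]) V,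
      W ≠ ⊥ ∧ W ≠ ⊤ ∧ (∀ v ∈ W, F v ∈ W) ∧
        Module.Free (Qq ⊗[ℚ_[p]] AlgebraicClosure ℚ_[p]) W :=
  simple_isocrystal_rank_one_general p Qq σ hσ V r hr b F hadd hbij hsemi
end

section
/- Let (V, F) be a rank-1 F-isocrystal on F_q (q = p^d) with coefficients in a p-adic local field L, i.e., V is free of rank 1 over Q_q ⊗_{Q_p} L and F is a (σ⊗1)-semilinear bijection. Let λ ∈ L^* be the eigenvalue of the L-linear map F^d. If λ lies in a subfield K ⊆ L and λ is a norm from (Q_q ⊗_{Q_p} K)^* to K^*, then (V, F) descends to an F-isocrystal with coefficients in K. -/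
/-!
Write `F b₀ = u • b₀` for a basis vector `b₀` and let `τ = σ ⊗ 1`. Then `F^d b₀ = N(u) • b₀`
with `N(u) = u · τ u ⋯ τ^(d-1) u`, so `N(u) = λ = N(a)` and `g = u / a` has norm `1`. Hilbert 90
for the cyclic automorphism `τ` of the semilocal ring `Qq ⊗ L` gives a unit `y` with
`g · τ y = y`, and in the basis `y • b₀` the Frobenius acts by `a ∈ Qq ⊗ K`.

Hilbert 90 is proved as for fields: for every `t` the element `Σ_{i<d} N_i(g) · τ^i t`, where
`N_i(g) = g · τ g ⋯ τ^(i-1) g`, is fixed by `x ↦ g · τ x`. Modulo a maximal ideal the characters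
`τ^i` stay distinct, so by Dedekind's independence of characters some `t` puts it outside that
ideal; since a vector space over an infinite field is not a finite union of proper subspaces,
some `t` makes it a unit.
-/

open TensorProduct

section OrbitProd

variable {R M : Type*} [CommSemiring R] [CommSemiring M] [Algebra R M] (τ : M ≃ₐ[R] M)

def orbitProd (n : ℕ) (x : M) : M := ∏ i ∈ Finset.range n, (τ ^ i) x

@[simp]
theorem orbitProd_zero (x : M) : orbitProd τ 0 x = 1 := Finset.prod_range_zero _

theorem orbitProd_succ' (n : ℕ) (x : M) : orbitProd τ (n + 1) x = x * τ (orbitProd τ n x) := by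
  simp only [orbitProd, Finset.prod_range_succ', map_prod, pow_succ', AlgEquiv.mul_apply,
    pow_zero, AlgEquiv.one_apply, mul_comm]

theorem orbitProd_mul (n : ℕ) (x y : M) :
    orbitProd τ n (x * y) = orbitProd τ n x * orbitProd τ n y := by
  simp only [orbitProd, map_mul, Finset.prod_mul_distrib]

theorem orbitProd_one (n : ℕ) : orbitProd τ n 1 = 1 := by
  simp [orbitProd]

theorem map_orbitProd {N : Type*} [CommSemiring N] [Algebra R N] (τ' : N ≃ₐ[R] N)
    (f : M →ₐ[R] N) (hf : ∀ x, f (τ x) = τ' (f x)) (n : ℕ) (x : M) :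
    f (orbitProd τ n x) = orbitProd τ' n (f x) := by
  induction n with
  | zero => simp
  | succ n ih => rw [orbitProd_succ', orbitProd_succ', map_mul, hf, ih]

theorem iterate_apply_eq_orbitProd_smul {V : Type*} [AddCommMonoid V] [Module M V]
    (F : V → V) (hF : ∀ (a : M) (v : V), F (a • v) = τ a • F v) {u : M} {v : V}
    (hv : F v = u • v) (n : ℕ) : F^[n] v = orbitProd τ n u • v := by
  induction n with
  | zero => simp
  | succ n ih =>
    rw [Function.iterate_succ_apply', ih, hF, hv, smul_smul, orbitProd_succ', mul_comm]

end OrbitProd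

section Hilbert90

variable {R M : Type*} [CommRing R] [CommRing M] [Algebra R M] (τ : M ≃ₐ[R] M)

def hilbert90Sum (n : ℕ) (g : M) : M →ₗ[R] M :=
  ∑ i ∈ Finset.range n, LinearMap.mulLeft R (orbitProd τ i g) ∘ₗ (τ ^ i).toLinearMap

theorem hilbert90Sum_apply (n : ℕ) (g t : M) :
    hilbert90Sum τ n g t = ∑ i ∈ Finset.range n, orbitProd τ i g * (τ ^ i) t := by
  simp [hilbert90Sum, LinearMap.sum_apply]

theorem mul_apply_hilbert90Sum {n : ℕ} (hτ : τ ^ n = 1) {g : M} (hg : orbitProd τ n g = 1)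
    (t : M) : g * τ (hilbert90Sum τ n g t) = hilbert90Sum τ n g t := by
  set f : ℕ → M := fun i => orbitProd τ i g * (τ ^ i) t
  have hperiod : f n = f 0 := by simp only [f, hg, hτ, orbitProd_zero, pow_zero]
  calc g * τ (hilbert90Sum τ n g t) = ∑ i ∈ Finset.range n, f (i + 1) := by
        simp only [f, hilbert90Sum_apply, map_sum, map_mul, Finset.mul_sum, ← mul_assoc,
          ← orbitProd_succ', pow_succ', AlgEquiv.mul_apply]
    _ = hilbert90Sum τ n g t := by
        rw [hilbert90Sum_apply]
        change ∑ i ∈ Finset.range n, f (i + 1) = ∑ i ∈ Finset.range n, f i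
        linear_combination Finset.sum_range_succ f n - Finset.sum_range_succ' f n + hperiod

theorem exists_hilbert90Sum_apply_notMem {n : ℕ} (hn : 0 < n) (g : M) {𝔪 : Ideal M}
    [𝔪.IsMaximal] (hdist : ∀ i j : Fin n, i ≠ j → ∃ x, (τ ^ (i : ℕ)) x - (τ ^ (j : ℕ)) x ∉ 𝔪) :
    ∃ t, hilbert90Sum τ n g t ∉ 𝔪 := by
  let π := Ideal.Quotient.mk 𝔪
  let χ : Fin n → M →* M ⧸ 𝔪 := fun i =>
    (π.comp (τ ^ (i : ℕ) : M ≃ₐ[R] M).toRingHom : M →* M ⧸ 𝔪)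
  have hχ : Function.Injective χ := by
    intro i j hij
    by_contra hne
    obtain ⟨x, hx⟩ := hdist i j hne
    exact hx (Ideal.Quotient.eq.mp (DFunLike.congr_fun hij x))
  by_contra! hmem
  have hsum : ∑ i : Fin n, π (orbitProd τ i g) • (χ i : M → M ⧸ 𝔪) = 0 := by
    funext t
    simpa [hilbert90Sum_apply, Finset.sum_range, χ] using
      Ideal.Quotient.eq_zero_iff_mem.mpr (hmem t)
  -- the coefficient `N_0(g) = 1` of the trivial character cannot vanish
  have h0 := Fintype.linearIndependent_iff.mp
    ((linearIndependent_monoidHom M (M ⧸ 𝔪)).comp χ hχ) _ hsum ⟨0, hn⟩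
  simp at h0

theorem exists_isUnit_apply_of_forall_exists_notMem {k N : Type*} [Field k] [Infinite k]
    [AddCommGroup N] [Module k N] [Algebra k M] [Finite (MaximalSpectrum M)] (P : N →ₗ[k] M)
    (h : ∀ 𝔪 : Ideal M, 𝔪.IsMaximal → ∃ t, P t ∉ 𝔪) : ∃ t, IsUnit (P t) := by
  by_contra! hP
  have hcover :
      ⋃ 𝔪 : MaximalSpectrum M, ((𝔪.asIdeal.restrictScalars k).comap P : Set N) = Set.univ := by
    refine Set.eq_univ_of_forall fun t => Set.mem_iUnion.mpr ?_
    obtain ⟨𝔪, h𝔪, ht⟩ := exists_max_ideal_of_mem_nonunits (mem_nonunits_iff.mpr (hP t))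
    exact ⟨⟨𝔪, h𝔪⟩, ht⟩
  obtain ⟨𝔪, htop⟩ := Subspace.exists_eq_top_of_iUnion_eq_univ hcover
  obtain ⟨t, ht⟩ := h 𝔪.asIdeal 𝔪.isMaximal
  exact ht (htop.symm ▸ Submodule.mem_top : t ∈ (𝔪.asIdeal.restrictScalars k).comap P)

end Hilbert90

theorem exists_mul_apply_eq_of_orbitProd_eq_one {k M : Type*} [Field k] [Infinite k]
    [CommRing M] [Algebra k M] [Finite (MaximalSpectrum M)] (τ : M ≃ₐ[k] M) {n : ℕ}
    (hn : 0 < n) (hτ : τ ^ n = 1)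
    (hdist : ∀ 𝔪 : Ideal M, 𝔪.IsMaximal →
      ∀ i j : Fin n, i ≠ j → ∃ x, (τ ^ (i : ℕ)) x - (τ ^ (j : ℕ)) x ∉ 𝔪)
    {g : M} (hg : orbitProd τ n g = 1) : ∃ y : Mˣ, g * τ y = y := by
  obtain ⟨t, ht⟩ := exists_isUnit_apply_of_forall_exists_notMem (hilbert90Sum τ n g)
    fun 𝔪 h𝔪 => exists_hilbert90Sum_apply_notMem τ hn g (hdist 𝔪 h𝔪)
  exact ⟨ht.unit, mul_apply_hilbert90Sum τ hτ hg t⟩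

namespace Algebra.TensorProduct

variable {k A B : Type*} [CommRing k] [CommRing A] [CommRing B] [Algebra k A] [Algebra k B]

theorem congr_mul (σ₁ σ₂ : A ≃ₐ[k] A) (τ₁ τ₂ : B ≃ₐ[k] B) :
    congr (σ₁ * σ₂) (τ₁ * τ₂) = congr σ₁ τ₁ * congr σ₂ τ₂ :=
  congr_trans σ₂ σ₁ τ₂ τ₁

theorem congr_pow (σ : A ≃ₐ[k] A) (τ : B ≃ₐ[k] B) (n : ℕ) :
    congr σ τ ^ n = congr (σ ^ n) (τ ^ n) := by
  induction n with
  | zero => exact congr_refl.symm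
  | succ n ih => rw [pow_succ, ih, ← congr_mul, ← pow_succ, ← pow_succ]

theorem map_id_congr_refl_apply {C : Type*} [CommRing C] [Algebra k C] (σ : A ≃ₐ[k] A)
    (f : B →ₐ[k] C) (z : A ⊗[k] B) :
    map (AlgHom.id k A) f (congr σ AlgEquiv.refl z) =
      congr σ AlgEquiv.refl (map (AlgHom.id k A) f z) := by
  induction z using TensorProduct.induction_on with
  | zero => simp
  | tmul x y => simp
  | add w v hw hv => simp only [map_add, hw, hv]

theorem exists_isUnit_congr_pow_sub {A : Type*} [Field A] [Algebra k A] (σ : A ≃ₐ[k] A)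
    {i j : ℕ} (hij : σ ^ i ≠ σ ^ j) :
    ∃ x, IsUnit ((congr σ (AlgEquiv.refl : B ≃ₐ[k] B) ^ i) x - (congr σ AlgEquiv.refl ^ j) x) := by
  obtain ⟨q, hq⟩ : ∃ q, (σ ^ i) q ≠ (σ ^ j) q := by
    by_contra! h
    exact hij (AlgEquiv.ext h)
  refine ⟨q ⊗ₜ 1, ?_⟩
  simpa [congr_pow, sub_tmul] using
    (sub_ne_zero.mpr hq).isUnit.map (includeLeft : A →ₐ[k] A ⊗[k] B)

end Algebra.TensorProduct

theorem exists_mul_congr_refl_apply_eq {k A B : Type*} [Field k] [Infinite k] [Field A] [Field B]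
    [Algebra k A] [Algebra k B] [FiniteDimensional k A] (σ : A ≃ₐ[k] A) {g : A ⊗[k] B}
    (hg : orbitProd (Algebra.TensorProduct.congr σ AlgEquiv.refl) (orderOf σ) g = 1) :
    ∃ y : (A ⊗[k] B)ˣ, g * Algebra.TensorProduct.congr σ AlgEquiv.refl (y : A ⊗[k] B) = y := by
  have : IsArtinianRing (B ⊗[k] A) := IsArtinianRing.of_finite B _
  have : IsArtinianRing (A ⊗[k] B) :=
    (Algebra.TensorProduct.comm k B A).surjective.isArtinianRing
  refine exists_mul_apply_eq_of_orbitProd_eq_one _ (orderOf_pos σ) ?_ ?_ hg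
  · rw [Algebra.TensorProduct.congr_pow, pow_orderOf_eq_one]
    exact (congr_arg _ (one_pow (M := B ≃ₐ[k] B) _)).trans Algebra.TensorProduct.congr_refl
  · intro 𝔪 h𝔪 i j hij
    obtain ⟨x, hx⟩ := Algebra.TensorProduct.exists_isUnit_congr_pow_sub (B := B) σ
      (pow_injOn_Iio_orderOf.ne i.2 j.2 (Fin.val_ne_of_ne hij))
    exact ⟨x, fun hmem => h𝔪.ne_top (Ideal.eq_top_of_isUnit_mem 𝔪 hmem hx)⟩

theorem exists_basis_apply_eq_smul_of_iterate {R M V : Type*} [CommRing R] [CommRing M]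
    [Algebra R M] [AddCommGroup V] [Module M V] (τ : M ≃ₐ[R] M) {n : ℕ}
    (h90 : ∀ g : M, orbitProd τ n g = 1 → ∃ y : Mˣ, g * τ y = y)
    (b₀ : Module.Basis (Fin 1) M V) (F : V → V) (hF : ∀ (a : M) (v : V), F (a • v) = τ a • F v)
    {w : M} (hw : IsUnit w) (hFn : F^[n] (b₀ 0) = orbitProd τ n w • b₀ 0) :
    ∃ b : Module.Basis (Fin 1) M V, F (b 0) = w • b 0 := by
  obtain ⟨w', hw'⟩ : ∃ w' : M, w * w' = 1 := ⟨_, hw.mul_val_inv⟩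
  set u := b₀.repr (F (b₀ 0)) 0
  have hu : F (b₀ 0) = u • b₀ 0 := by simpa using (b₀.sum_repr (F (b₀ 0))).symm
  have hnorm : orbitProd τ n u = orbitProd τ n w :=
    b₀.linearIndependent.smul_left_injective 0 <| by
      simp only [← iterate_apply_eq_orbitProd_smul τ F hF hu, hFn]
  obtain ⟨y, hy⟩ := h90 (u * w') <| by
    rw [orbitProd_mul, hnorm, ← orbitProd_mul, hw', orbitProd_one]
  have hcoef : τ y * u = w * y := by
    linear_combination (-(u * τ y)) * hw' + w * hy
  refine ⟨b₀.unitsSMul fun _ => y, ?_⟩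
  rw [Module.Basis.unitsSMul_apply, Units.smul_def, hF, hu, smul_smul, hcoef, mul_smul]

theorem rank_one_isocrystal_descends_general
    (p d : ℕ) [Fact p.Prime]
    (Qq : Type*) [Field Qq] [Algebra ℚ_[p] Qq] [IsGalois ℚ_[p] Qq]
    [FiniteDimensional ℚ_[p] Qq] (hdeg : Module.finrank ℚ_[p] Qq = d)
    (σ : Qq ≃ₐ[ℚ_[p]] Qq) (hσ : ∀ h : Qq ≃ₐ[ℚ_[p]] Qq, h ∈ Subgroup.zpowers σ)
    (K L : Type*) [Field K] [Field L] [Algebra ℚ_[p] K] [Algebra ℚ_[p] L]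
    [Algebra K L] [IsScalarTower ℚ_[p] K L]
    (V : Type*) [AddCommGroup V] [Module (Qq ⊗[ℚ_[p]] L) V]
    (b₀ : Module.Basis (Fin 1) (Qq ⊗[ℚ_[p]] L) V)
    (F : V → V)
    (hsemi : ∀ (a : Qq ⊗[ℚ_[p]] L) (v : V),
      F (a • v) = (Algebra.TensorProduct.congr σ (AlgEquiv.refl : L ≃ₐ[ℚ_[p]] L)) a • F v)
    -- the eigenvalue of `F^d` lies in the subfield `K`
    (lam : K)
    (heig : ∀ v : V,
      F^[d] v =
        ((Algebra.TensorProduct.includeRight : L →ₐ[ℚ_[p]] Qq ⊗[ℚ_[p]] L)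
          (algebraMap K L lam)) • v)
    -- `lam` is a norm from `(Qq ⊗[ℚ_p] K)^*`
    (hnorm : ∃ a : Qq ⊗[ℚ_[p]] K, IsUnit a ∧
      ∏ i ∈ Finset.range d,
        ((Algebra.TensorProduct.congr σ (AlgEquiv.refl : K ≃ₐ[ℚ_[p]] K)) ^ i) a
        = (Algebra.TensorProduct.includeRight : K →ₐ[ℚ_[p]] Qq ⊗[ℚ_[p]] K) lam) :
    ∃ (b : Module.Basis (Fin 1) (Qq ⊗[ℚ_[p]] L) V) (c : Qq ⊗[ℚ_[p]] K), IsUnit c ∧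
      F (b 0) =
        (Algebra.TensorProduct.map (AlgHom.id ℚ_[p] Qq)
          (IsScalarTower.toAlgHom ℚ_[p] K L)) c • b 0 := by
  obtain ⟨a, ha, ha_norm⟩ := hnorm
  have hord : orderOf σ = d := by
    rw [orderOf_eq_card_of_forall_mem_zpowers hσ, IsGalois.card_aut_eq_finrank, hdeg]
  let ι := Algebra.TensorProduct.map (AlgHom.id ℚ_[p] Qq) (IsScalarTower.toAlgHom ℚ_[p] K L)
  have hFd : F^[d] (b₀ 0) =
      orbitProd (Algebra.TensorProduct.congr σ AlgEquiv.refl) d (ι a) • b₀ 0 := by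
    rw [heig, ← map_orbitProd _ _ ι (Algebra.TensorProduct.map_id_congr_refl_apply σ _),
      orbitProd, ha_norm]
    simp [ι]
  obtain ⟨b, hb⟩ := exists_basis_apply_eq_smul_of_iterate _
    (fun g hg => exists_mul_congr_refl_apply_eq σ (hord ▸ hg)) b₀ F hsemi (ha.map ι) hFd
  exact ⟨b, a, ha, hb⟩

/-- **Descent of rank-1 `F`-isocrystals whose Frobenius eigenvalue is a norm.**
Let `q = p^d`, let `Qq` be the unramified (cyclic Galois) extension of `ℚ_p` of degree
`d` with Frobenius generator `σ`, and let `K ⊆ L` be `p`-adic local fields.  Let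
`(V, F)` be a rank-1 `F`-isocrystal on `𝔽_q` with coefficients in `L`: `V` is free of
rank 1 over `Qq ⊗[ℚ_p] L` and `F` is a `(σ ⊗ 1)`-semilinear bijection.  Suppose the
eigenvalue `lam` of the linear map `F^d` lies in `K` and is a norm from
`(Qq ⊗[ℚ_p] K)^*` to `K^*`.  Then `(V, F)` descends to an `F`-isocrystal with
coefficients in `K`: there is a basis vector on which `F` acts by (the image of) an
invertible element of `Qq ⊗[ℚ_p] K`. -/
theorem rank_one_isocrystal_descends
    (p d : ℕ) [Fact p.Prime]
    (Qq : Type*) [Field Qq] [Algebra ℚ_[p] Qq] [IsGalois ℚ_[p] Qq]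
    [FiniteDimensional ℚ_[p] Qq] (hdeg : Module.finrank ℚ_[p] Qq = d)
    (σ : Qq ≃ₐ[ℚ_[p]] Qq) (hσ : ∀ h : Qq ≃ₐ[ℚ_[p]] Qq, h ∈ Subgroup.zpowers σ)
    (K L : Type*) [Field K] [Field L] [Algebra ℚ_[p] K] [Algebra ℚ_[p] L]
    [Algebra K L] [IsScalarTower ℚ_[p] K L]
    (V : Type*) [AddCommGroup V] [Module (Qq ⊗[ℚ_[p]] L) V]
    (b₀ : Module.Basis (Fin 1) (Qq ⊗[ℚ_[p]] L) V)
    (F : V → V)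
    (hadd : ∀ x y : V, F (x + y) = F x + F y)
    (hbij : Function.Bijective F)
    (hsemi : ∀ (a : Qq ⊗[ℚ_[p]] L) (v : V),
      F (a • v) = (Algebra.TensorProduct.congr σ (AlgEquiv.refl : L ≃ₐ[ℚ_[p]] L)) a • F v)
    -- the eigenvalue of `F^d` lies in the subfield `K`
    (lam : K) (hlam : lam ≠ 0)
    (heig : ∀ v : V,
      F^[d] v =
        ((Algebra.TensorProduct.includeRight : L →ₐ[ℚ_[p]] Qq ⊗[ℚ_[p]] L)
          (algebraMap K L lam)) • v)
    -- `lam` is a norm from `(Qq ⊗[ℚ_p] K)^*`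
    (hnorm : ∃ a : Qq ⊗[ℚ_[p]] K, IsUnit a ∧
      ∏ i ∈ Finset.range d,
        ((Algebra.TensorProduct.congr σ (AlgEquiv.refl : K ≃ₐ[ℚ_[p]] K)) ^ i) a
        = (Algebra.TensorProduct.includeRight : K →ₐ[ℚ_[p]] Qq ⊗[ℚ_[p]] K) lam) :
    ∃ (b : Module.Basis (Fin 1) (Qq ⊗[ℚ_[p]] L) V) (c : Qq ⊗[ℚ_[p]] K), IsUnit c ∧
      F (b 0) =
        (Algebra.TensorProduct.map (AlgHom.id ℚ_[p] Qq)
          (IsScalarTower.toAlgHom ℚ_[p] K L)) c • b 0 :=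
  rank_one_isocrystal_descends_general p d Qq hdeg σ hσ K L V b₀ F hsemi lam heig hnorm
end
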